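/- Let 1 ≤ i ≤ s and write ξ_i = (k,t). If (a,b) ∈ B_i^{(1.2)} of type (c) (i.e. (a,b) ∈ B_i, 1 < a < k, t < b < k, and (k,b) ∉ B_{i−1} or (a,t) ∉ B_{i−1}) and (b,c) ∈ B_i^{(1.1)}, then (a,c) ∈ B_i^{(1.1)}. -/

import Mathlib

open Finset MvPolynomial

namespace Panov

/-- The set `A` of places `(i,j)` with `n ≥ i > j ≥ 1`. -/
def placesA (n : ℕ) : Finset (ℕ × ℕ) :=
  (Finset.range (n + 1) ×ˢ Finset.range (n + 1)).filter fun p => 1 ≤ p.2 ∧ p.2 < p.1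

/-- The rank of a place in the linear order `≻`:
`η ≻ ζ` iff `ordA n η < ordA n ζ`. -/
def ordA (n : ℕ) (p : ℕ × ℕ) : ℕ := p.2 * (n + 1) + (n - p.1)

/-- The `≻`-greatest element of a (nonempty) set `B` of places:
the element with the minimal value of `ordA`. -/
def xiOf (n : ℕ) (B : Finset (ℕ × ℕ)) : ℕ × ℕ :=
  let m := WithTop.untopD 0 ((B.image (ordA n)).min)
  (n - m % (n + 1), m / (n + 1))

/-- The places that get the symbol `−` at the current step, when the
current set of unfilled places is `B`. -/
def minusSet (n : ℕ) (B : Finset (ℕ × ℕ)) : Finset (ℕ × ℕ) :=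
  B.filter fun p =>
    p.1 = (xiOf n B).1 ∧ (xiOf n B).2 < p.2 ∧ p.2 < (xiOf n B).1 ∧ (p.2, (xiOf n B).2) ∈ B

/-- The places that get the symbol `+` at the current step. -/
def plusSet (n : ℕ) (B : Finset (ℕ × ℕ)) : Finset (ℕ × ℕ) :=
  B.filter fun p =>
    p.2 = (xiOf n B).2 ∧ (xiOf n B).2 < p.1 ∧ p.1 < (xiOf n B).1 ∧ ((xiOf n B).1, p.1) ∈ B

/-- `Bset n M i` is the set of places unfilled after step `i` of the diagram. -/
def Bset (n : ℕ) (M : Finset (ℕ × ℕ)) : ℕ → Finset (ℕ × ℕ)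
  | 0 => placesA n \ M
  | i + 1 =>
      Bset n M i \
        insert (xiOf n (Bset n M i)) (minusSet n (Bset n M i) ∪ plusSet n (Bset n M i))

/-- `ξ_i`, the place that receives `⊗` at step `i ≥ 1`. -/
def xiStep (n : ℕ) (M : Finset (ℕ × ℕ)) (i : ℕ) : ℕ × ℕ := xiOf n (Bset n M (i - 1))

/-- `C_i⁻`, the places filled with `−` at step `i ≥ 1`. -/
def Cminus (n : ℕ) (M : Finset (ℕ × ℕ)) (i : ℕ) : Finset (ℕ × ℕ) :=
  minusSet n (Bset n M (i - 1))

/-- `C_i⁺`, the places filled with `+` at step `i ≥ 1`. -/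
def Cplus (n : ℕ) (M : Finset (ℕ × ℕ)) (i : ℕ) : Finset (ℕ × ℕ) :=
  plusSet n (Bset n M (i - 1))

/-- `M ⊆ A` spans an ideal `𝔪` of `𝔫 = ut(n,K)`. -/
def IsIdealSet (n : ℕ) (M : Finset (ℕ × ℕ)) : Prop :=
  M ⊆ placesA n ∧
    (∀ p ∈ M, ∀ d, 1 ≤ d → d < p.2 → (p.1, d) ∈ M) ∧
    (∀ p ∈ M, ∀ c, p.1 < c → c ≤ n → (c, p.2) ∈ M)

/-- `s` is the number of steps after which the diagram is complete. -/
def IsNumSteps (n : ℕ) (M : Finset (ℕ × ℕ)) (s : ℕ) : Prop :=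
  Bset n M s = ∅ ∧ ∀ j < s, (Bset n M j).Nonempty



/-- `(a,b) ∈ B_i^{(1.1)}` (relative to `ξ_i = (k,t)`):  `(a,b) ∈ B_i`,
`1 < a < k`, `t < b < k`, and both `(a,t)` and `(k,b)` lie in `B_{i−1}`. -/
def memB11 (n : ℕ) (M : Finset (ℕ × ℕ)) (i k t : ℕ) (q : ℕ × ℕ) : Prop :=
  q ∈ Bset n M i ∧ 1 < q.1 ∧ q.1 < k ∧ t < q.2 ∧ q.2 < k ∧
    (q.1, t) ∈ Bset n M (i - 1) ∧ (k, q.2) ∈ Bset n M (i - 1)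

/-- `(a,b) ∈ B_i^{(1.2)}` of type (c) (relative to `ξ_i = (k,t)`):
`(a,b) ∈ B_i`, `1 < a < k`, `t < b < k`, and `(a,t) ∉ B_{i−1}` or
`(k,b) ∉ B_{i−1}`. -/
def memB12c (n : ℕ) (M : Finset (ℕ × ℕ)) (i k t : ℕ) (q : ℕ × ℕ) : Prop :=
  q ∈ Bset n M i ∧ 1 < q.1 ∧ q.1 < k ∧ t < q.2 ∧ q.2 < k ∧
    ((q.1, t) ∉ Bset n M (i - 1) ∨ (k, q.2) ∉ Bset n M (i - 1))

/-!
The unfilled places outside `M` are closed under composition `(a,b), (b,c) ↦ (a,c)` at every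
step: if a step filled `(a,c)` (with `⊗`, `−` or `+`) while `(a,b)` and `(b,c)` stayed unfilled,
the same rule would have filled `(a,b)` or `(b,c)` as well. Since `M` is an ideal and `(k,t)`,
`(k,c)` are unfilled, neither `(a,t)` nor `(a,c)` lies in `M`, so composing with `(b,t) ∈ B_{i−1}`
and `(b,c) ∈ B_i` gives `(a,t) ∈ B_{i−1}` and `(a,c) ∈ B_i`.
-/

lemma mem_placesA {n : ℕ} {p : ℕ × ℕ} : p ∈ placesA n ↔ p.1 ≤ n ∧ 1 ≤ p.2 ∧ p.2 < p.1 := by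
  simp only [placesA, mem_filter, mem_product, mem_range]
  omega

lemma ordA_decode {n : ℕ} {p : ℕ × ℕ} (hp : p.1 ≤ n) :
    (n - ordA n p % (n + 1), ordA n p / (n + 1)) = p := by
  have hlt : n - p.1 < n + 1 := by omega
  rw [ordA, add_comm, Nat.add_mul_mod_self_right, Nat.mod_eq_of_lt hlt,
    Nat.add_mul_div_right _ _ n.succ_pos, Nat.div_eq_of_lt hlt]
  ext <;> simp only [zero_add]; omega

lemma xiOf_mem {n : ℕ} {B : Finset (ℕ × ℕ)} (hB : B.Nonempty) (hBA : B ⊆ placesA n) :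
    xiOf n B ∈ B := by
  have himg : (B.image (ordA n)).Nonempty := hB.image _
  obtain ⟨p, hpB, hp⟩ := mem_image.mp (min'_mem _ himg)
  have hxi : xiOf n B = p := by
    rw [xiOf, ← coe_min' himg, ← hp]
    exact ordA_decode (mem_placesA.mp (hBA hpB)).1
  exact hxi ▸ hpB

lemma Bset_antitone (n : ℕ) (M : Finset (ℕ × ℕ)) : Antitone (Bset n M) :=
  antitone_nat_of_succ_le fun _ => sdiff_subset

lemma Bset_subset_placesA (n : ℕ) (M : Finset (ℕ × ℕ)) (j : ℕ) : Bset n M j ⊆ placesA n :=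
  (Bset_antitone n M j.zero_le).trans sdiff_subset

lemma disjoint_Bset (n : ℕ) (M : Finset (ℕ × ℕ)) (j : ℕ) : Disjoint (Bset n M j) M :=
  (disjoint_sdiff_self_left).mono_left (Bset_antitone n M j.zero_le)

namespace IsIdealSet

variable {n : ℕ} {M : Finset (ℕ × ℕ)}

lemma not_mem_of_lt_fst (hM : IsIdealSet n M) {a k t : ℕ} (hkt : (k, t) ∉ M) (hak : a < k)
    (hkn : k ≤ n) : (a, t) ∉ M :=
  fun hat => hkt (hM.2.2 (a, t) hat k hak hkn)

lemma not_mem_of_lt_snd (hM : IsIdealSet n M) {k t b : ℕ} (hkt : (k, t) ∉ M) (ht : 1 ≤ t)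
    (htb : t < b) : (k, b) ∉ M :=
  fun hkb => hkt (hM.2.1 (k, b) hkb t ht htb)

end IsIdealSet

def IsTransClosedOutside (M B : Finset (ℕ × ℕ)) : Prop :=
  ∀ a b c, (a, b) ∈ B → (b, c) ∈ B → (a, c) ∉ M → (a, c) ∈ B

lemma isTransClosedOutside_placesA_sdiff (n : ℕ) (M : Finset (ℕ × ℕ)) :
    IsTransClosedOutside M (placesA n \ M) := by
  intro a b c hab hbc hac
  simp only [mem_sdiff, mem_placesA] at hab hbc ⊢
  exact ⟨by omega, hac⟩

lemma IsTransClosedOutside.step {n : ℕ} {M B : Finset (ℕ × ℕ)} (hM : IsIdealSet n M)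
    (hBA : B ⊆ placesA n) (hBM : Disjoint B M) (hB : IsTransClosedOutside M B) :
    IsTransClosedOutside M (B \ insert (xiOf n B) (minusSet n B ∪ plusSet n B)) := by
  intro a b c hab hbc hac
  have hξB := xiOf_mem ⟨_, (mem_sdiff.mp hab).1⟩ hBA
  have hξM : xiOf n B ∉ M := disjoint_left.mp hBM hξB
  have hξn := (mem_placesA.mp (hBA hξB)).1
  simp only [mem_sdiff, mem_insert, mem_union, minusSet, plusSet, mem_filter] at hab hbc ⊢
  have hcba : c < b ∧ b < a := ⟨(mem_placesA.mp (hBA hbc.1)).2.2, (mem_placesA.mp (hBA hab.1)).2.2⟩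
  have hc1 : 1 ≤ c := (mem_placesA.mp (hBA hbc.1)).2.1
  refine ⟨hB a b c hab.1 hbc.1 hac, ?_⟩
  generalize xiOf n B = ξ at *
  obtain ⟨k, l⟩ := ξ
  dsimp only at *
  rintro (hξ | ⟨-, rfl, hlc, hck, hcl⟩ | ⟨-, rfl, hla, hak, hka⟩)
  · obtain ⟨rfl, rfl⟩ := Prod.ext_iff.mp hξ
    exact hab.2 (.inr (.inl ⟨hab.1, rfl, hcba.1, hcba.2, hbc.1⟩))
  · -- `(a,c)` got `−`, so `(b,l)` is unfilled and `(a,b)` gets `−` too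
    have hbl := hB b c l hbc.1 hcl (hM.not_mem_of_lt_fst hξM (by omega) hξn)
    exact hab.2 (.inr (.inl ⟨hab.1, rfl, by omega, by omega, hbl⟩))
  · -- `(a,c)` got `+`, so `(k,b)` is unfilled and `(b,c)` gets `+` too
    have hkb := hB k a b hka hab.1 (hM.not_mem_of_lt_snd hξM hc1 (by omega))
    exact hbc.2 (.inr (.inr ⟨hbc.1, rfl, by omega, by omega, hkb⟩))

lemma isTransClosedOutside_Bset {n : ℕ} {M : Finset (ℕ × ℕ)} (hM : IsIdealSet n M) (j : ℕ) :
    IsTransClosedOutside M (Bset n M j) := by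
  induction j with
  | zero => exact isTransClosedOutside_placesA_sdiff n M
  | succ j ih => exact ih.step hM (Bset_subset_placesA n M j) (disjoint_Bset n M j)

theorem case6ii_general
    (n : ℕ) (M : Finset (ℕ × ℕ))
    (hM : IsIdealSet n M)
    (i k t : ℕ)
    (hkt : xiStep n M i = (k, t))
    (a b c : ℕ)
    (h1 : memB12c n M i k t (a, b))
    (h2 : memB11 n M i k t (b, c)) :
    memB11 n M i k t (a, c) := by
  obtain ⟨hab, ha1, hak, -⟩ := h1
  obtain ⟨hbc, -, -, htc, hck, hbt, hkc⟩ := h2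
  have hktB : (k, t) ∈ Bset n M (i - 1) :=
    hkt ▸ xiOf_mem ⟨_, hkc⟩ (Bset_subset_placesA n M (i - 1))
  have hkn : k ≤ n := (mem_placesA.mp (Bset_subset_placesA n M _ hktB)).1
  have hatM := hM.not_mem_of_lt_fst (disjoint_left.mp (disjoint_Bset n M _) hktB) hak hkn
  have hacM := hM.not_mem_of_lt_fst (disjoint_left.mp (disjoint_Bset n M _) hkc) hak hkn
  have hat := isTransClosedOutside_Bset hM (i - 1) a b t
    (Bset_antitone n M (i.sub_le 1) hab) hbt hatM
  have hac := isTransClosedOutside_Bset hM i a b c hab hbc hacM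
  exact ⟨hac, ha1, hak, htc, hck, hat, hkc⟩

/-- **Case 6(ii).**  Writing `ξ_i = (k,t)`: if `(a,b) ∈ B_i^{(1.2)}` of type (c)
and `(b,c) ∈ B_i^{(1.1)}`, then `(a,c) ∈ B_i^{(1.1)}`. -/
theorem case6ii (K : Type*) [Field K] [CharZero K]
    (n s : ℕ) (hn : 2 ≤ n) (M : Finset (ℕ × ℕ))
    (hM : IsIdealSet n M) (hs : IsNumSteps n M s)
    (i k t : ℕ) (hi1 : 1 ≤ i) (his : i ≤ s)
    (hkt : xiStep n M i = (k, t))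
    (a b c : ℕ)
    (h1 : memB12c n M i k t (a, b))
    (h2 : memB11 n M i k t (b, c)) :
    memB11 n M i k t (a, c) :=
  case6ii_general n M hM i k t hkt a b c h1 h2

end Panov
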